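/- Let C ∈ C^{N×N} be Hermitian positive definite, t ∈ C^N, and let V⁽²⁾ ∈ C^{N×m} have orthonormal columns. Suppose D = C^{1/2} diag(t) V⁽²⁾ has full column rank with QR decomposition D = QR (Q^H Q = I, R invertible). Set θ = V⁽²⁾ R^{-1} Q^H C^{1/2} t. Then θ^H diag(t)^H C t = θ^H diag(t)^H C diag(t) θ = t^H C^{1/2} Q Q^H C^{1/2} t. -/

import Mathlib

open Matrix
open scoped ComplexOrder

noncomputable def Matrix.PosSemidef.sqrt {n : Type*} [Fintype n] [DecidableEq n]
    {𝕜 : Type*} [RCLike 𝕜] {A : Matrix n n 𝕜} (hA : A.PosSemidef) : Matrix n n 𝕜 :=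
  hA.1.eigenvectorUnitary.1 * diagonal ((↑) ∘ (√·) ∘ hA.1.eigenvalues) *
    (star hA.1.eigenvectorUnitary : Matrix n n 𝕜)

namespace Matrix

section Sqrt

variable {n 𝕜 : Type*} [Fintype n] [DecidableEq n] [RCLike 𝕜] {A : Matrix n n 𝕜}

theorem PosSemidef.conjTranspose_sqrt (hA : A.PosSemidef) : hA.sqrtᴴ = hA.sqrt := by
  have hdiag : star ((↑) ∘ (√·) ∘ hA.1.eigenvalues : n → 𝕜) = (↑) ∘ (√·) ∘ hA.1.eigenvalues := by
    funext i
    simp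
  rw [PosSemidef.sqrt, conjTranspose_mul, conjTranspose_mul, diagonal_conjTranspose, hdiag,
    star_eq_conjTranspose, conjTranspose_conjTranspose, Matrix.mul_assoc]

theorem PosSemidef.sqrt_mul_self (hA : A.PosSemidef) : hA.sqrt * hA.sqrt = A := by
  set U : Matrix n n 𝕜 := hA.1.eigenvectorUnitary.1
  set Λ : Matrix n n 𝕜 := diagonal ((↑) ∘ (√·) ∘ hA.1.eigenvalues)
  have hU : star U * U = 1 := Unitary.coe_star_mul_self _
  have hΛ : Λ * Λ = diagonal ((↑) ∘ hA.1.eigenvalues) := by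
    rw [diagonal_mul_diagonal]
    congr 1
    funext i
    simp only [Function.comp, ← RCLike.ofReal_mul, Real.mul_self_sqrt (hA.eigenvalues_nonneg i)]
  conv_rhs => rw [hA.1.spectral_theorem, Unitary.conjStarAlgAut_apply]
  calc hA.sqrt * hA.sqrt = U * (Λ * (star U * U) * Λ) * star U := by
        simp only [PosSemidef.sqrt, U, Λ, Matrix.mul_assoc]
    _ = U * diagonal ((↑) ∘ hA.1.eigenvalues) * star U := by rw [hU, Matrix.mul_one, hΛ]

end Sqrt

section Dot

variable {m n R : Type*} [Fintype m] [Fintype n] [CommSemiring R] [StarRing R]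

theorem star_mulVec_dotProduct (M : Matrix m n R) (v : n → R) (w : m → R) :
    star (M *ᵥ v) ⬝ᵥ w = star v ⬝ᵥ Mᴴ *ᵥ w := by
  rw [star_mulVec, dotProduct_mulVec]

theorem star_dotProduct_conjTranspose_mul_mulVec (S : Matrix m n R) (v w : n → R) :
    star v ⬝ᵥ (Sᴴ * S) *ᵥ w = star (S *ᵥ v) ⬝ᵥ S *ᵥ w := by
  rw [star_mulVec_dotProduct, mulVec_mulVec]

theorem star_mulVec_dotProduct_mulVec_of_conjTranspose_mul_self_eq_one [DecidableEq n]
    {Q : Matrix m n R} (hQ : Qᴴ * Q = 1) (v w : n → R) :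
    star (Q *ᵥ v) ⬝ᵥ Q *ᵥ w = star v ⬝ᵥ w := by
  rw [star_mulVec_dotProduct, mulVec_mulVec, hQ, one_mulVec]

end Dot

end Matrix

theorem stmt13_general (N m : ℕ) (C : Matrix (Fin N) (Fin N) ℂ) (hC : C.PosDef)
    (t : Fin N → ℂ)
    (V2 : Matrix (Fin N) (Fin m) ℂ)
    (D Q : Matrix (Fin N) (Fin m) ℂ) (R : Matrix (Fin m) (Fin m) ℂ)
    (hD : D = hC.posSemidef.sqrt * Matrix.diagonal t * V2)
    (hQ : Qᴴ * Q = 1) (hR : IsUnit R)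
    (hQR : D = Q * R)
    (θ : Fin N → ℂ)
    (hθ : θ = V2.mulVec (R⁻¹.mulVec (Qᴴ.mulVec (hC.posSemidef.sqrt.mulVec t)))) :
    star ((Matrix.diagonal t).mulVec θ) ⬝ᵥ C.mulVec t
        = star (Qᴴ.mulVec (hC.posSemidef.sqrt.mulVec t)) ⬝ᵥ
            Qᴴ.mulVec (hC.posSemidef.sqrt.mulVec t) ∧
    star ((Matrix.diagonal t).mulVec θ) ⬝ᵥ C.mulVec ((Matrix.diagonal t).mulVec θ)
        = star (Qᴴ.mulVec (hC.posSemidef.sqrt.mulVec t)) ⬝ᵥ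
            Qᴴ.mulVec (hC.posSemidef.sqrt.mulVec t) := by
  set S := hC.posSemidef.sqrt
  have hC_eq : C = Sᴴ * S := by
    rw [hC.posSemidef.conjTranspose_sqrt, hC.posSemidef.sqrt_mul_self]
  -- `S diag(t) θ = D R⁻¹ Qᴴ S t = Q Qᴴ S t`: the projection of `S t` onto the range of `Q`.
  have hSθ : S *ᵥ (diagonal t *ᵥ θ) = Q *ᵥ (Qᴴ *ᵥ (S *ᵥ t)) := by
    rw [hθ, mulVec_mulVec, mulVec_mulVec, mulVec_mulVec, ← hD, hQR,
      mul_nonsing_inv_cancel_right _ _ ((isUnit_iff_isUnit_det R).mp hR)]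
  rw [hC_eq, star_dotProduct_conjTranspose_mul_mulVec, star_dotProduct_conjTranspose_mul_mulVec,
    hSθ, star_mulVec_dotProduct, star_mulVec_dotProduct_mulVec_of_conjTranspose_mul_self_eq_one hQ]
  exact ⟨rfl, rfl⟩

/-- With `C` Hermitian positive definite, `V⁽²⁾` having orthonormal
columns, `D = C^{1/2} diag(t) V⁽²⁾` of full column rank with QR decomposition
`D = Q R`, and `θ = V⁽²⁾ R⁻¹ Qᴴ C^{1/2} t`, both the cross term
`θᴴ diag(t)ᴴ C t` and the quadratic term `θᴴ diag(t)ᴴ C diag(t) θ` equal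
`tᴴ C^{1/2} Q Qᴴ C^{1/2} t`. -/
theorem stmt13 (N m : ℕ) (C : Matrix (Fin N) (Fin N) ℂ) (hC : C.PosDef)
    (t : Fin N → ℂ)
    (V2 : Matrix (Fin N) (Fin m) ℂ) (hV2 : V2ᴴ * V2 = 1)
    (D Q : Matrix (Fin N) (Fin m) ℂ) (R : Matrix (Fin m) (Fin m) ℂ)
    (hD : D = hC.posSemidef.sqrt * Matrix.diagonal t * V2)
    (hrank : D.rank = m)
    (hQ : Qᴴ * Q = 1) (hR : IsUnit R) (hRtri : R.BlockTriangular id)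
    (hQR : D = Q * R)
    (θ : Fin N → ℂ)
    (hθ : θ = V2.mulVec (R⁻¹.mulVec (Qᴴ.mulVec (hC.posSemidef.sqrt.mulVec t)))) :
    star ((Matrix.diagonal t).mulVec θ) ⬝ᵥ C.mulVec t
        = star (Qᴴ.mulVec (hC.posSemidef.sqrt.mulVec t)) ⬝ᵥ
            Qᴴ.mulVec (hC.posSemidef.sqrt.mulVec t) ∧
    star ((Matrix.diagonal t).mulVec θ) ⬝ᵥ C.mulVec ((Matrix.diagonal t).mulVec θ)
        = star (Qᴴ.mulVec (hC.posSemidef.sqrt.mulVec t)) ⬝ᵥ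
            Qᴴ.mulVec (hC.posSemidef.sqrt.mulVec t) :=
  stmt13_general N m C hC t V2 D Q R hD hQ hR hQR θ hθ
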